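/- arXiv:math/0410428 — 5 statements merged into one kernel-verified Lean document; each statement's English description precedes it below -/
import Mathlib

section
/- Let a and b be positive integers with a ≤ b, and let C > 0 be a real number. Then 0 < ∑_{κ=a}^{b} ln(1 + C/κ) ≤ ln(1 + C/a) + b·ln(1 + C/b) − a·ln(1 + C/a) + C·ln((b + C)/(a + C)). -/
/-!
The summand `log (1 + C / x)` is positive and decreasing in `x > 0`, so the sum is positive and,
comparing each term after the first with the integral over the unit interval to its left, at most
`log (1 + C / a) + ∫_a^b log (1 + C / x) dx`. Since `log (1 + C / x) = log (x + C) - log x`, an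
antiderivative is `(x + C) log (x + C) - x log x`, which evaluates to the stated bound.
-/

open Real Finset

lemma AntitoneOn.sum_Icc_le_add_integral {f : ℝ → ℝ} {a b : ℕ} (hab : a ≤ b)
    (hf : AntitoneOn f (Set.Icc (a : ℝ) b)) :
    ∑ k ∈ Icc a b, f k ≤ f a + ∫ x in (a : ℝ)..b, f x := by
  have hshift : ∑ i ∈ Ico a b, f ((i + 1 : ℕ) : ℝ) = ∑ k ∈ Ioc a b, f k := by
    rw [sum_Ico_add' (fun k : ℕ => f k), ← Ico_succ_succ_eq_Ioc]
    rfl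
  rw [← add_sum_Ioc_eq_sum_Icc hab, ← hshift]
  exact add_le_add_right (hf.sum_le_integral_Ico hab) _

namespace Real

lemma log_one_add_div_eq_sub {x C : ℝ} (hx : x ≠ 0) (hxC : x + C ≠ 0) :
    log (1 + C / x) = log (x + C) - log x := by
  rw [← log_div hxC hx, add_div' _ _ _ hx, one_mul]

lemma log_one_add_div_pos {x C : ℝ} (hx : 0 < x) (hC : 0 < C) : 0 < log (1 + C / x) :=
  log_pos (lt_add_of_pos_right 1 (div_pos hC hx))

lemma antitoneOn_log_one_add_div {C : ℝ} (hC : 0 ≤ C) :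
    AntitoneOn (fun x => log (1 + C / x)) (Set.Ioi 0) := by
  intro x (hx : 0 < x) y (hy : 0 < y) hxy
  dsimp only
  gcongr

lemma hasDerivAt_add_mul_log_add_sub_mul_log {x C : ℝ} (hx : x ≠ 0) (hxC : x + C ≠ 0) :
    HasDerivAt (fun y => (y + C) * log (y + C) - y * log y) (log (1 + C / x)) x := by
  refine (((hasDerivAt_mul_log hxC).comp_add_const x C).sub (hasDerivAt_mul_log hx)).congr_deriv ?_
  rw [log_one_add_div_eq_sub hx hxC]
  ring

lemma integral_log_one_add_div {a b C : ℝ} (ha : 0 < a) (hb : 0 < b) (hC : 0 ≤ C) :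
    ∫ x in a..b, log (1 + C / x) =
      ((b + C) * log (b + C) - b * log b) - ((a + C) * log (a + C) - a * log a) := by
  have hpos : Set.uIcc a b ⊆ Set.Ioi 0 := fun _ hx =>
    (lt_min ha hb).trans_le hx.1
  refine intervalIntegral.integral_eq_sub_of_hasDerivAt
    (f := fun y => (y + C) * log (y + C) - y * log y) (fun x hx => ?_)
    ((antitoneOn_log_one_add_div hC).mono hpos).intervalIntegrable
  have hx : 0 < x := hpos hx
  exact hasDerivAt_add_mul_log_add_sub_mul_log hx.ne' (by positivity)

end Real

/-- For positive integers `a ≤ b` and real `C > 0`,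
`0 < ∑_{κ=a}^{b} ln(1 + C/κ)` and this sum is at most
`ln(1 + C/a) + b·ln(1 + C/b) − a·ln(1 + C/a) + C·ln((b + C)/(a + C))`. -/
theorem sum_log_one_add_div_bounds
    (a b : ℕ) (ha : 0 < a) (hab : a ≤ b) (C : ℝ) (hC : 0 < C) :
    0 < ∑ κ ∈ Finset.Icc a b, Real.log (1 + C / (κ : ℝ)) ∧
    ∑ κ ∈ Finset.Icc a b, Real.log (1 + C / (κ : ℝ)) ≤
      Real.log (1 + C / (a : ℝ)) + (b : ℝ) * Real.log (1 + C / (b : ℝ))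
        - (a : ℝ) * Real.log (1 + C / (a : ℝ))
        + C * Real.log (((b : ℝ) + C) / ((a : ℝ) + C)) := by
  have ha' : (0 : ℝ) < a := by exact_mod_cast ha
  have hb' : (0 : ℝ) < b := ha'.trans_le (by exact_mod_cast hab)
  constructor
  · refine sum_pos (fun κ hκ => log_one_add_div_pos ?_ hC) ⟨a, left_mem_Icc.mpr hab⟩
    exact_mod_cast ha.trans_le (mem_Icc.mp hκ).1
  · have hanti : AntitoneOn (fun x => log (1 + C / x)) (Set.Icc (a : ℝ) b) :=
      (antitoneOn_log_one_add_div hC.le).mono fun x hx => ha'.trans_le hx.1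
    refine (hanti.sum_Icc_le_add_integral hab).trans_eq ?_
    rw [integral_log_one_add_div ha' hb' hC.le, log_one_add_div_eq_sub ha'.ne' (by positivity),
      log_one_add_div_eq_sub hb'.ne' (by positivity), log_div (by positivity) (by positivity)]
    ring
end

section
/- Let A be an n×n complex matrix and let k be the maximal Jordan block size of A. Then there exists a constant γ*(A) > 0 such that for every ε > 0 there is a norm p = p_{A,ε} on ℂ^n with the following properties, where p^∼ denotes the operator norm on n×n matrices associated to p: (i) p(x) ≤ γ*(A)·max(1, 1/ε)^{k−1}·h(x) and h(x) ≤ γ*(A)·max(1, ε)^{k−1}·p(x) for all x ∈ ℂ^n; (ii) p^∼(B) ≤ γ*(A)²·max(ε, 1/ε)^{k−1}·h^∼(B) and h^∼(B) ≤ γ*(A)²·max(ε, 1/ε)^{k−1}·p^∼(B) for every n×n complex matrix B; (iii) ‖A‖_sp ≤ p^∼(A) ≤ ‖A‖_sp + sign(k−1)·ε; and (iv) if A is invertible and ‖A^{−1}‖_sp^{−1} > sign(k−1)·ε, then ‖A^{−1}‖_sp ≤ p^∼(A^{−1}) ≤ (‖A^{−1}‖_sp^{−1} − sign(k−1)·ε)^{−1}.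 -/
open Matrix

/-- `p` is a norm on `ℂ^n`. -/
def IsNormOn {n : ℕ} (p : (Fin n → ℂ) → ℝ) : Prop :=
  (∀ x, 0 ≤ p x) ∧ (∀ x, p x = 0 → x = 0) ∧
  (∀ (c : ℂ) (x), p (c • x) = ‖c‖ * p x) ∧
  (∀ x y, p (x + y) ≤ p x + p y)

/-- The operator norm on `n×n` complex matrices associated with a norm `p` on `ℂ^n`. -/
noncomputable def opNormWrt {n : ℕ} (p : (Fin n → ℂ) → ℝ)
    (B : Matrix (Fin n) (Fin n) ℂ) : ℝ :=
  sSup {c : ℝ | ∃ x : Fin n → ℂ, p x ≤ 1 ∧ c = p (B.mulVec x)}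

/-- The sup norm `h` on `ℂ^n`. -/
noncomputable def hNorm {n : ℕ} (x : Fin n → ℂ) : ℝ := ‖x‖

/-- The spectral radius: the maximum of the absolute values of the eigenvalues. -/
noncomputable def specRad {n : ℕ} (A : Matrix (Fin n) (Fin n) ℂ) : ℝ :=
  sSup {r : ℝ | ∃ μ : ℂ, A.charpoly.IsRoot μ ∧ r = ‖μ‖}

/-- `k` is the maximal Jordan block size of `A`: the least positive integer `k` with
`ker((A − λI)^k) = ker((A − λI)^{k+1})` for every eigenvalue `λ` of `A`. -/
def IsMaxJordanSize {n : ℕ} (A : Matrix (Fin n) (Fin n) ℂ) (k : ℕ) : Prop :=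
  IsLeast {j : ℕ | 0 < j ∧ ∀ μ : ℂ, A.charpoly.IsRoot μ →
    LinearMap.ker (Matrix.mulVecLin ((A - μ • 1) ^ j)) =
      LinearMap.ker (Matrix.mulVecLin ((A - μ • 1) ^ (j + 1)))} k

/-!
`ℂⁿ` is the direct sum of the generalized eigenspaces `W_μ` of `A`, and `N = A - μ` satisfies
`N ^ k = 0` on `W_μ`. On `W_μ` the norm `q_μ z = ∑_{j<k} ε⁻ʲ ‖N ^ j z‖` satisfies
`q_μ (N z) ≤ ε q_μ z`, with `q_μ (N z) = 0` when `k = 1`, hence `|q_μ (A z) - |μ| q_μ z| ≤ ε q_μ z`.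
Summing `q_μ` over the components of `x` gives a norm `p` with
`(min |μ| - ε) p x ≤ p (A x) ≤ (max |μ| + ε) p x`, where `max |μ| = ρ(A)` and
`min |μ| = ρ(A⁻¹)⁻¹`. The weights `ε⁻ʲ`, `j < k`, produce the factors `max 1 ε⁻¹ ^ (k - 1)` in the
comparison with the sup norm.
-/

open Finset Module

section Krylov

variable {𝕜 V : Type*} [NormedField 𝕜] [SeminormedAddCommGroup V] [NormedSpace 𝕜 V]

noncomputable def krylovNorm (g : End 𝕜 V) (k : ℕ) (ε : ℝ) (z : V) : ℝ :=
  ∑ j ∈ range k, ε⁻¹ ^ j * ‖(g ^ j) z‖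

variable {g : End 𝕜 V} {k : ℕ} {ε : ℝ}

theorem krylovNorm_nonneg (hε : 0 ≤ ε) (z : V) : 0 ≤ krylovNorm g k ε z :=
  sum_nonneg fun _ _ => by positivity

theorem krylovNorm_smul (c : 𝕜) (z : V) :
    krylovNorm g k ε (c • z) = ‖c‖ * krylovNorm g k ε z := by
  simp only [krylovNorm, map_smul, norm_smul, mul_sum]
  exact sum_congr rfl fun _ _ => by ring

theorem krylovNorm_neg (z : V) : krylovNorm g k ε (-z) = krylovNorm g k ε z := by
  simpa using krylovNorm_smul (g := g) (k := k) (ε := ε) (-1 : 𝕜) z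

theorem krylovNorm_add_le (hε : 0 ≤ ε) (y z : V) :
    krylovNorm g k ε (y + z) ≤ krylovNorm g k ε y + krylovNorm g k ε z := by
  rw [krylovNorm, krylovNorm, krylovNorm, ← sum_add_distrib]
  refine sum_le_sum fun j _ => ?_
  rw [map_add, ← mul_add]
  exact mul_le_mul_of_nonneg_left (norm_add_le _ _) (by positivity)

theorem krylovNorm_sub_le (hε : 0 ≤ ε) (y z : V) :
    krylovNorm g k ε (y - z) ≤ krylovNorm g k ε y + krylovNorm g k ε z := by
  simpa only [sub_eq_add_neg, krylovNorm_neg] using krylovNorm_add_le hε y (-z)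

theorem norm_le_krylovNorm (hk : 0 < k) (hε : 0 ≤ ε) (z : V) : ‖z‖ ≤ krylovNorm g k ε z := by
  calc ‖z‖ = ε⁻¹ ^ 0 * ‖(g ^ 0) z‖ := by simp
    _ ≤ krylovNorm g k ε z :=
      single_le_sum (f := fun j => ε⁻¹ ^ j * ‖(g ^ j) z‖) (fun _ _ => by positivity)
        (mem_range.2 hk)

theorem krylovNorm_le (hε : 0 < ε) (z : V) :
    krylovNorm g k ε z ≤ max 1 ε⁻¹ ^ (k - 1) * ∑ j ∈ range k, ‖(g ^ j) z‖ := by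
  rw [krylovNorm, mul_sum]
  refine sum_le_sum fun j hj => mul_le_mul_of_nonneg_right ?_ (norm_nonneg _)
  calc ε⁻¹ ^ j ≤ max 1 ε⁻¹ ^ j := pow_le_pow_left₀ (by positivity) (le_max_right _ _) j
    _ ≤ max 1 ε⁻¹ ^ (k - 1) :=
      pow_le_pow_right₀ (le_max_left _ _) (Nat.le_sub_one_of_lt (mem_range.1 hj))

theorem krylovNorm_apply_le (hε : 0 < ε) {z : V} (hz : (g ^ k) z = 0) :
    krylovNorm g k ε (g z) ≤ (if k = 1 then 0 else 1) * ε * krylovNorm g k ε z := by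
  split_ifs with hk
  · subst hk
    rw [pow_one] at hz
    simp [krylovNorm, hz]
  · -- the weight of `g ^ (j + 1) z` is `ε` times that of `g ^ j z`, and `g ^ k z` vanishes
    calc krylovNorm g k ε (g z) = ε * ∑ j ∈ range k, ε⁻¹ ^ (j + 1) * ‖(g ^ (j + 1)) z‖ := by
          rw [krylovNorm, mul_sum]
          refine sum_congr rfl fun j _ => ?_
          rw [pow_succ g, Module.End.mul_apply, pow_succ' ε⁻¹, mul_assoc,
            mul_inv_cancel_left₀ hε.ne']
      _ ≤ ε * ∑ j ∈ range (k + 1), ε⁻¹ ^ j * ‖(g ^ j) z‖ := by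
          rw [sum_range_succ' _ k]
          gcongr
          exact le_add_of_nonneg_right (by positivity)
      _ = 1 * ε * krylovNorm g k ε z := by
          rw [sum_range_succ, hz, norm_zero, mul_zero, add_zero, one_mul, krylovNorm]

theorem abs_krylovNorm_apply_sub_le (f : End 𝕜 V) (μ : 𝕜) (hε : 0 < ε) {z : V}
    (hz : ((f - μ • 1) ^ k) z = 0) :
    |krylovNorm (f - μ • 1) k ε (f z) - ‖μ‖ * krylovNorm (f - μ • 1) k ε z| ≤
      (if k = 1 then 0 else 1) * ε * krylovNorm (f - μ • 1) k ε z := by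
  have hg := krylovNorm_apply_le hε hz
  have hfz : f z = μ • z + (f - μ • 1) z := by simp
  have hμz : μ • z = f z - (f - μ • 1) z := by simp
  have hsmul := krylovNorm_smul (g := f - μ • 1) (k := k) (ε := ε) μ z
  rw [abs_sub_le_iff]
  constructor
  · have := krylovNorm_add_le (g := f - μ • 1) (k := k) hε.le (μ • z) ((f - μ • 1) z)
    rw [← hfz] at this
    linarith
  · have := krylovNorm_sub_le (g := f - μ • 1) (k := k) hε.le (f z) ((f - μ • 1) z)
    rw [← hμz] at this
    linarith

end Krylov

namespace DirectSum

variable {ι R M : Type*} [DecidableEq ι] [Semiring R] [AddCommMonoid M] [Module R M]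
  (ℳ : ι → Submodule R M) [Decomposition ℳ]

noncomputable def decomposeProj (i : ι) : M →ₗ[R] M :=
  (ℳ i).subtype ∘ₗ component R ι (fun i => ℳ i) i ∘ₗ (decomposeLinearEquiv ℳ).toLinearMap

theorem decomposeProj_apply (i : ι) (x : M) : decomposeProj ℳ i x = decompose ℳ x i := rfl

theorem decomposeProj_mem (i : ι) (x : M) : decomposeProj ℳ i x ∈ ℳ i :=
  (decompose ℳ x i).2

theorem sum_decomposeProj [Fintype ι] (x : M) : ∑ i, decomposeProj ℳ i x = x := by
  conv_rhs => rw [← Decomposition.left_inv (ℳ := ℳ) x, ← sum_univ_of (Decomposition.decompose' x)]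
  simp [decomposeProj_apply, Decomposition.decompose'_eq]

theorem decomposeProj_map_of_mapsTo [Fintype ι] {f : M →ₗ[R] M}
    (hf : ∀ i, ∀ x ∈ ℳ i, f x ∈ ℳ i) (i : ι) (x : M) :
    decomposeProj ℳ i (f x) = f (decomposeProj ℳ i x) := by
  conv_lhs => rw [← sum_decomposeProj ℳ x, map_sum, map_sum]
  rw [Finset.sum_eq_single i]
  · exact decompose_of_mem_same ℳ (hf i _ (decomposeProj_mem ℳ i x))
  · exact fun j _ hji => decompose_of_mem_ne ℳ (hf j _ (decomposeProj_mem ℳ j x)) hji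
  · exact fun h => absurd (Finset.mem_univ i) h

end DirectSum

theorem Module.End.isInternal_maxGenEigenspace {K V : Type*} [Field K] [IsAlgClosed K]
    [AddCommGroup V] [Module K V] [FiniteDimensional K V] [DecidableEq K] (f : End K V)
    (s : Finset K) (hs : ∀ μ, f.HasEigenvalue μ → μ ∈ s) :
    DirectSum.IsInternal fun μ : s => f.maxGenEigenspace μ := by
  refine DirectSum.isInternal_submodule_of_iSupIndep_of_iSup_eq_top
    (f.independent_maxGenEigenspace.comp Subtype.val_injective) ?_
  rw [eq_top_iff, ← f.iSup_maxGenEigenspace_eq_top]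
  refine iSup_le fun μ => ?_
  by_cases hμ : f.HasEigenvalue μ
  · exact le_iSup (fun ν : s => f.maxGenEigenspace ν) ⟨μ, hs μ hμ⟩
  · have : ¬ f.HasUnifEigenvalue μ ⊤ :=
      mt (hasUnifEigenvalue_iff_hasUnifEigenvalue_one (by simp)).mp hμ
    rw [HasUnifEigenvalue, not_not] at this
    simp [this]

theorem Module.End.pow_apply_eq_zero_of_ker_pow_eq {K V : Type*} [DivisionRing K]
    [AddCommGroup V] [Module K V] {g : End K V} {k m : ℕ}
    (h : LinearMap.ker (g ^ k) = LinearMap.ker (g ^ (k + 1))) {x : V} (hx : (g ^ m) x = 0) :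
    (g ^ k) x = 0 := by
  have : x ∈ LinearMap.ker (g ^ (k + m)) := by
    rw [pow_add]
    exact LinearMap.ker_le_ker_comp (g ^ m) (g ^ k) hx
  rwa [← ker_pow_constant h m] at this

section AdaptedNorm

open DirectSum

variable {𝕜 V ι : Type*} [NormedField 𝕜] [NormedAddCommGroup V] [NormedSpace 𝕜 V]
  [Fintype ι] [DecidableEq ι] (W : ι → Submodule 𝕜 V) [Decomposition W]

noncomputable def adaptedNorm (f : End 𝕜 V) (c : ι → 𝕜) (k : ℕ) (ε : ℝ) (x : V) : ℝ :=
  ∑ i, krylovNorm (f - c i • 1) k ε (decomposeProj W i x)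

variable {W} {f : End 𝕜 V} {c : ι → 𝕜} {k : ℕ} {ε : ℝ}

theorem adaptedNorm_nonneg (hε : 0 ≤ ε) (x : V) : 0 ≤ adaptedNorm W f c k ε x :=
  sum_nonneg fun _ _ => krylovNorm_nonneg hε _

theorem adaptedNorm_smul (a : 𝕜) (x : V) :
    adaptedNorm W f c k ε (a • x) = ‖a‖ * adaptedNorm W f c k ε x := by
  simp only [adaptedNorm, map_smul, krylovNorm_smul, mul_sum]

theorem adaptedNorm_add_le (hε : 0 ≤ ε) (x y : V) :
    adaptedNorm W f c k ε (x + y) ≤ adaptedNorm W f c k ε x + adaptedNorm W f c k ε y := by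
  simp only [adaptedNorm, map_add, ← sum_add_distrib]
  exact sum_le_sum fun _ _ => krylovNorm_add_le hε _ _

theorem norm_le_adaptedNorm (hk : 0 < k) (hε : 0 ≤ ε) (x : V) :
    ‖x‖ ≤ adaptedNorm W f c k ε x :=
  calc ‖x‖ = ‖∑ i, decomposeProj W i x‖ := by rw [sum_decomposeProj]
    _ ≤ ∑ i, ‖decomposeProj W i x‖ := norm_sum_le _ _
    _ ≤ adaptedNorm W f c k ε x := sum_le_sum fun _ _ => norm_le_krylovNorm hk hε _

theorem adaptedNorm_le (hε : 0 < ε) (x : V) :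
    adaptedNorm W f c k ε x ≤
      max 1 ε⁻¹ ^ (k - 1) * ∑ i, ∑ j ∈ range k, ‖((f - c i • 1) ^ j) (decomposeProj W i x)‖ := by
  rw [adaptedNorm, mul_sum]
  exact sum_le_sum fun _ _ => krylovNorm_le hε _

theorem abs_adaptedNorm_apply_sub_le (hf : ∀ i, ∀ x ∈ W i, f x ∈ W i)
    (hnil : ∀ i, ∀ x ∈ W i, ((f - c i • 1) ^ k) x = 0) (hε : 0 < ε) (x : V) (i : ι) :
    |krylovNorm (f - c i • 1) k ε (decomposeProj W i (f x)) -
        ‖c i‖ * krylovNorm (f - c i • 1) k ε (decomposeProj W i x)| ≤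
      (if k = 1 then 0 else 1) * ε * krylovNorm (f - c i • 1) k ε (decomposeProj W i x) := by
  rw [decomposeProj_map_of_mapsTo W hf]
  exact abs_krylovNorm_apply_sub_le f (c i) hε (hnil i _ (decomposeProj_mem W i x))

theorem adaptedNorm_apply_le (hf : ∀ i, ∀ x ∈ W i, f x ∈ W i)
    (hnil : ∀ i, ∀ x ∈ W i, ((f - c i • 1) ^ k) x = 0) (hε : 0 < ε) {R : ℝ}
    (hR : ∀ i, ‖c i‖ ≤ R) (x : V) :
    adaptedNorm W f c k ε (f x) ≤ (R + (if k = 1 then 0 else 1) * ε) * adaptedNorm W f c k ε x := by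
  rw [adaptedNorm, adaptedNorm, mul_sum]
  refine sum_le_sum fun i _ => ?_
  have := (abs_le.1 (abs_adaptedNorm_apply_sub_le hf hnil hε x i)).2
  have := mul_le_mul_of_nonneg_right (hR i) (krylovNorm_nonneg (g := f - c i • 1) (k := k) hε.le
    (decomposeProj W i x))
  linarith

theorem le_adaptedNorm_apply (hf : ∀ i, ∀ x ∈ W i, f x ∈ W i)
    (hnil : ∀ i, ∀ x ∈ W i, ((f - c i • 1) ^ k) x = 0) (hε : 0 < ε) {r : ℝ}
    (hr : ∀ i, r ≤ ‖c i‖) (x : V) :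
    (r - (if k = 1 then 0 else 1) * ε) * adaptedNorm W f c k ε x ≤ adaptedNorm W f c k ε (f x) := by
  rw [adaptedNorm, adaptedNorm, mul_sum]
  refine sum_le_sum fun i _ => ?_
  have := (abs_le.1 (abs_adaptedNorm_apply_sub_le hf hnil hε x i)).1
  have := mul_le_mul_of_nonneg_right (hr i) (krylovNorm_nonneg (g := f - c i • 1) (k := k) hε.le
    (decomposeProj W i x))
  linarith

end AdaptedNorm

theorem LinearMap.exists_sum_norm_apply_le {𝕜 V E ι : Type*} [NontriviallyNormedField 𝕜]
    [CompleteSpace 𝕜] [NormedAddCommGroup V] [NormedSpace 𝕜 V] [FiniteDimensional 𝕜 V]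
    [NormedAddCommGroup E] [NormedSpace 𝕜 E] (s : Finset ι) (L : ι → V →ₗ[𝕜] E) :
    ∃ C, ∀ x, ∑ i ∈ s, ‖L i x‖ ≤ C * ‖x‖ :=
  ⟨∑ i ∈ s, ‖(L i).toContinuousLinearMap‖, fun x => by
    rw [sum_mul]
    exact sum_le_sum fun i _ => (L i).toContinuousLinearMap.le_opNorm x⟩

theorem exists_adaptedNorm_le {𝕜 V ι : Type*} [NontriviallyNormedField 𝕜] [CompleteSpace 𝕜]
    [NormedAddCommGroup V] [NormedSpace 𝕜 V] [FiniteDimensional 𝕜 V] [Fintype ι] [DecidableEq ι]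
    (W : ι → Submodule 𝕜 V) [DirectSum.Decomposition W] (f : End 𝕜 V) (c : ι → 𝕜) (k : ℕ) :
    ∃ Γ, ∀ ε, 0 < ε → ∀ x, adaptedNorm W f c k ε x ≤ Γ * max 1 ε⁻¹ ^ (k - 1) * ‖x‖ := by
  obtain ⟨Γ, hΓ⟩ := LinearMap.exists_sum_norm_apply_le (univ ×ˢ range k)
    fun ij : ι × ℕ => ((f - c ij.1 • 1) ^ ij.2) ∘ₗ DirectSum.decomposeProj W ij.1
  refine ⟨Γ, fun ε hε x => (adaptedNorm_le hε x).trans ?_⟩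
  have hx := hΓ x
  rw [sum_product] at hx
  calc _ ≤ max 1 ε⁻¹ ^ (k - 1) * (Γ * ‖x‖) := mul_le_mul_of_nonneg_left hx (by positivity)
    _ = Γ * max 1 ε⁻¹ ^ (k - 1) * ‖x‖ := by ring

section OpNormWrt

variable {n : ℕ} {p q : (Fin n → ℂ) → ℝ}

theorem isNormOn_hNorm : IsNormOn (hNorm (n := n)) :=
  ⟨norm_nonneg, fun _ => norm_eq_zero.mp, norm_smul, norm_add_le⟩

theorem IsNormOn.map_zero (hp : IsNormOn p) : p 0 = 0 := by
  simpa using hp.2.2.1 0 0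

theorem IsNormOn.pos (hp : IsNormOn p) {x : Fin n → ℂ} (hx : x ≠ 0) : 0 < p x :=
  (hp.1 x).lt_of_ne' fun h => hx (hp.2.1 x h)

theorem opNormWrt_nonneg (hp : IsNormOn p) (B : Matrix (Fin n) (Fin n) ℂ) :
    0 ≤ opNormWrt p B :=
  Real.sSup_nonneg fun _ ⟨_, _, he⟩ => he ▸ hp.1 _

theorem opNormWrt_le (hp : IsNormOn p) {B : Matrix (Fin n) (Fin n) ℂ} {C : ℝ} (hC : 0 ≤ C)
    (h : ∀ x, p (B *ᵥ x) ≤ C * p x) : opNormWrt p B ≤ C :=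
  csSup_le ⟨_, 0, by simp [hp.map_zero], rfl⟩ fun _ ⟨x, hx, he⟩ =>
    he ▸ (h x).trans (mul_le_of_le_one_right hC hx)

theorem le_opNormWrt_mul (hp : IsNormOn p) {B : Matrix (Fin n) (Fin n) ℂ}
    (hB : ∃ C, ∀ x, p (B *ᵥ x) ≤ C * p x) (x : Fin n → ℂ) :
    p (B *ᵥ x) ≤ opNormWrt p B * p x := by
  obtain ⟨C, hC⟩ := hB
  have hbdd : BddAbove {c : ℝ | ∃ x : Fin n → ℂ, p x ≤ 1 ∧ c = p (B *ᵥ x)} :=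
    ⟨max C 0, fun _ ⟨z, hz, he⟩ => he ▸ (hC z).trans <|
      (mul_le_mul_of_nonneg_right (le_max_left C 0) (hp.1 z)).trans
        (mul_le_of_le_one_right (le_max_right C 0) hz)⟩
  rcases eq_or_ne x 0 with rfl | hx
  · simp [hp.map_zero]
  have hpx := hp.pos hx
  have hnorm : ‖((p x : ℂ))⁻¹‖ = (p x)⁻¹ := by
    rw [norm_inv, Complex.norm_real, Real.norm_of_nonneg hpx.le]
  have hy : (p x)⁻¹ * p (B *ᵥ x) ≤ opNormWrt p B := by
    refine le_csSup hbdd ⟨((p x : ℂ))⁻¹ • x, ?_, ?_⟩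
    · rw [hp.2.2.1, hnorm, inv_mul_cancel₀ hpx.ne']
    · rw [mulVec_smul, hp.2.2.1, hnorm]
  rwa [inv_mul_le_iff₀ hpx, mul_comm] at hy

theorem opNormWrt_le_mul_opNormWrt (hp : IsNormOn p) (hq : IsNormOn q) {a b : ℝ} (ha : 0 ≤ a)
    (hb : 0 ≤ b) (hpq : ∀ x, p x ≤ a * q x) (hqp : ∀ x, q x ≤ b * p x)
    {B : Matrix (Fin n) (Fin n) ℂ} (hB : ∃ C, ∀ x, q (B *ᵥ x) ≤ C * q x) :
    opNormWrt p B ≤ a * b * opNormWrt q B := by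
  have hqB := opNormWrt_nonneg hq B
  refine opNormWrt_le hp (by positivity) fun x => ?_
  calc p (B *ᵥ x) ≤ a * q (B *ᵥ x) := hpq _
    _ ≤ a * (opNormWrt q B * (b * p x)) := by
      gcongr
      exact (le_opNormWrt_mul hq hB x).trans (by gcongr; exact hqp x)
    _ = a * b * opNormWrt q B * p x := by ring

theorem exists_hNorm_mulVec_le (B : Matrix (Fin n) (Fin n) ℂ) :
    ∃ C, 0 ≤ C ∧ ∀ x, hNorm (B *ᵥ x) ≤ C * hNorm x :=
  ⟨_, norm_nonneg _, (toLin' B).toContinuousLinearMap.le_opNorm⟩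

theorem exists_mulVec_le_of_le_hNorm {a b : ℝ} (ha : 0 ≤ a) (hpa : ∀ x, p x ≤ a * hNorm x)
    (hpb : ∀ x, hNorm x ≤ b * p x) (B : Matrix (Fin n) (Fin n) ℂ) :
    ∃ C, ∀ x, p (B *ᵥ x) ≤ C * p x := by
  obtain ⟨C, hC, hBC⟩ := exists_hNorm_mulVec_le B
  refine ⟨a * C * b, fun x => ?_⟩
  calc p (B *ᵥ x) ≤ a * hNorm (B *ᵥ x) := hpa _
    _ ≤ a * (C * (b * p x)) := by
      gcongr
      exact (hBC x).trans (by gcongr; exact hpb x)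
    _ = a * C * b * p x := by ring

theorem opNormWrt_nonsing_inv_le (hp : IsNormOn p) {A : Matrix (Fin n) (Fin n) ℂ}
    (hA : IsUnit A.det) {c : ℝ} (hc : 0 < c) (h : ∀ x, c * p x ≤ p (A *ᵥ x)) :
    opNormWrt p A⁻¹ ≤ c⁻¹ :=
  opNormWrt_le hp (inv_nonneg.2 hc.le) fun y => by
    rw [inv_mul_eq_div, le_div_iff₀' hc]
    simpa [mulVec_mulVec, mul_nonsing_inv A hA] using h (A⁻¹ *ᵥ y)

end OpNormWrt

section Spectrum

variable {n : ℕ} {A : Matrix (Fin n) (Fin n) ℂ} {μ : ℂ}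

theorem isRoot_charpoly_iff_hasEigenvalue :
    A.charpoly.IsRoot μ ↔ End.HasEigenvalue (toLin' A) μ := by
  rw [End.hasEigenvalue_iff_mem_spectrum, spectrum_toLin', mem_spectrum_iff_isRoot_charpoly]

theorem mem_roots_toFinset_charpoly : μ ∈ A.charpoly.roots.toFinset ↔ A.charpoly.IsRoot μ := by
  rw [Multiset.mem_toFinset, Polynomial.mem_roots A.charpoly_monic.ne_zero]

theorem specRad_nonneg (A : Matrix (Fin n) (Fin n) ℂ) : 0 ≤ specRad A :=
  Real.sSup_nonneg fun _ ⟨μ, _, he⟩ => he ▸ norm_nonneg μ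

theorem norm_le_specRad (hμ : A.charpoly.IsRoot μ) : ‖μ‖ ≤ specRad A := by
  refine le_csSup (Set.Finite.bddAbove ?_) ⟨μ, hμ, rfl⟩
  refine (A.charpoly.roots.toFinset.finite_toSet.image (‖·‖)).subset ?_
  rintro _ ⟨ν, hν, rfl⟩
  exact ⟨ν, mem_roots_toFinset_charpoly.2 hν, rfl⟩

theorem specRad_le_opNormWrt {p : (Fin n → ℂ) → ℝ} (hp : IsNormOn p)
    (hA : ∃ C, ∀ x, p (A *ᵥ x) ≤ C * p x) : specRad A ≤ opNormWrt p A := by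
  refine Real.sSup_le ?_ (opNormWrt_nonneg hp A)
  rintro _ ⟨μ, hμ, rfl⟩
  obtain ⟨v, hv, hv0⟩ := (isRoot_charpoly_iff_hasEigenvalue.1 hμ).exists_hasEigenvector
  rw [End.mem_eigenspace_iff, toLin'_apply] at hv
  have := le_opNormWrt_mul hp hA v
  rw [hv, hp.2.2.1] at this
  exact le_of_mul_le_mul_right this (hp.pos hv0)

theorem inv_specRad_inv_le_norm (hA : IsUnit A.det) (hpos : 0 < specRad A⁻¹)
    (hμ : A.charpoly.IsRoot μ) : (specRad A⁻¹)⁻¹ ≤ ‖μ‖ := by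
  obtain ⟨u, rfl⟩ := (isUnit_iff_isUnit_det A).2 hA
  rw [← mem_spectrum_iff_isRoot_charpoly] at hμ
  have hμ0 : μ ≠ 0 := by
    rintro rfl
    exact (spectrum.zero_mem_iff ℂ).1 hμ u.isUnit
  have hμinv : (u : Matrix (Fin n) (Fin n) ℂ)⁻¹.charpoly.IsRoot μ⁻¹ := by
    rw [← coe_units_inv, ← mem_spectrum_iff_isRoot_charpoly, ← spectrum.inv₀_mem_iff, inv_inv]
    exact hμ
  refine inv_le_of_inv_le₀ (norm_pos_iff.2 hμ0) ?_
  simpa using norm_le_specRad hμinv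

end Spectrum

section JordanAdaptedNorm

variable {n : ℕ} (A : Matrix (Fin n) (Fin n) ℂ)

def genEigenspaces (μ : A.charpoly.roots.toFinset) : Submodule ℂ (Fin n → ℂ) :=
  End.maxGenEigenspace (toLin' A) μ

theorem isInternal_genEigenspaces : DirectSum.IsInternal (genEigenspaces A) :=
  End.isInternal_maxGenEigenspace (toLin' A) _ fun _ hμ =>
    mem_roots_toFinset_charpoly.2 (isRoot_charpoly_iff_hasEigenvalue.2 hμ)

noncomputable instance : DirectSum.Decomposition (genEigenspaces A) :=
  (isInternal_genEigenspaces A).chooseDecomposition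

theorem toLin'_mem_genEigenspaces (μ : A.charpoly.roots.toFinset) {x : Fin n → ℂ}
    (hx : x ∈ genEigenspaces A μ) : toLin' A x ∈ genEigenspaces A μ :=
  End.mapsTo_maxGenEigenspace_of_comm (Commute.refl (toLin' A)) (μ : ℂ) hx

variable {A} {k : ℕ}

theorem IsMaxJordanSize.pow_apply_eq_zero (hk : IsMaxJordanSize A k)
    (μ : A.charpoly.roots.toFinset) {x : Fin n → ℂ} (hx : x ∈ genEigenspaces A μ) :
    ((toLin' A - (μ : ℂ) • 1) ^ k) x = 0 := by
  have hpow (j : ℕ) : ((A - (μ : ℂ) • 1) ^ j).mulVecLin = (toLin' A - (μ : ℂ) • 1) ^ j := by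
    change toLinAlgEquiv' _ = _
    rw [map_pow, map_sub, map_smul, map_one]
    rfl
  have hker := hk.1.2 μ (mem_roots_toFinset_charpoly.1 μ.2)
  rw [hpow, hpow] at hker
  obtain ⟨m, hm⟩ := (End.mem_maxGenEigenspace (toLin' A) μ x).1 hx
  exact End.pow_apply_eq_zero_of_ker_pow_eq hker hm

noncomputable def jordanAdaptedNorm (A : Matrix (Fin n) (Fin n) ℂ) (k : ℕ) (ε : ℝ) :
    (Fin n → ℂ) → ℝ :=
  adaptedNorm (genEigenspaces A) (toLin' A) Subtype.val k ε

theorem isNormOn_jordanAdaptedNorm (hk : 0 < k) {ε : ℝ} (hε : 0 < ε) :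
    IsNormOn (jordanAdaptedNorm A k ε) :=
  ⟨adaptedNorm_nonneg hε.le,
    fun x hx => norm_le_zero_iff.1 (hx ▸ norm_le_adaptedNorm hk hε.le x),
    adaptedNorm_smul, adaptedNorm_add_le hε.le⟩

theorem hNorm_le_jordanAdaptedNorm (hk : 0 < k) {ε : ℝ} (hε : 0 < ε) (x : Fin n → ℂ) :
    hNorm x ≤ jordanAdaptedNorm A k ε x :=
  norm_le_adaptedNorm hk hε.le x

theorem exists_jordanAdaptedNorm_le (A : Matrix (Fin n) (Fin n) ℂ) (k : ℕ) :
    ∃ Γ, ∀ ε, 0 < ε → ∀ x, jordanAdaptedNorm A k ε x ≤ Γ * max 1 ε⁻¹ ^ (k - 1) * hNorm x :=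
  exists_adaptedNorm_le _ _ _ k

theorem jordanAdaptedNorm_mulVec_le (hk : IsMaxJordanSize A k) {ε : ℝ} (hε : 0 < ε)
    (x : Fin n → ℂ) :
    jordanAdaptedNorm A k ε (A *ᵥ x) ≤
      (specRad A + (if k = 1 then 0 else 1) * ε) * jordanAdaptedNorm A k ε x :=
  adaptedNorm_apply_le (toLin'_mem_genEigenspaces A) hk.pow_apply_eq_zero hε
    (fun μ => norm_le_specRad (mem_roots_toFinset_charpoly.1 μ.2)) x

theorem le_jordanAdaptedNorm_mulVec (hk : IsMaxJordanSize A k) {ε : ℝ} (hε : 0 < ε)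
    (hA : IsUnit A.det) (hpos : 0 < specRad A⁻¹) (x : Fin n → ℂ) :
    ((specRad A⁻¹)⁻¹ - (if k = 1 then 0 else 1) * ε) * jordanAdaptedNorm A k ε x ≤
      jordanAdaptedNorm A k ε (A *ᵥ x) :=
  le_adaptedNorm_apply (toLin'_mem_genEigenspaces A) hk.pow_apply_eq_zero hε
    (fun μ => inv_specRad_inv_le_norm hA hpos (mem_roots_toFinset_charpoly.1 μ.2)) x

end JordanAdaptedNorm

theorem max_one_inv_mul_max_one {ε : ℝ} (hε : 0 < ε) : max 1 ε⁻¹ * max 1 ε = max ε ε⁻¹ := by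
  rcases le_total ε 1 with h | h
  · have h' : 1 ≤ ε⁻¹ := (one_le_inv₀ hε).2 h
    rw [max_eq_right h', max_eq_left h, max_eq_right (h.trans h'), mul_one]
  · have h' : ε⁻¹ ≤ 1 := inv_le_one_of_one_le₀ h
    rw [max_eq_left h', max_eq_right h, max_eq_left (h'.trans h), one_mul]

/-- Gutnik, Lemma 2. -/
theorem exists_adapted_norm
    (n k : ℕ) (A : Matrix (Fin n) (Fin n) ℂ) (hk : IsMaxJordanSize A k) :
    ∃ γ : ℝ, 0 < γ ∧ ∀ ε : ℝ, 0 < ε → ∃ p : (Fin n → ℂ) → ℝ, IsNormOn p ∧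
      (∀ x, p x ≤ γ * (max 1 (1 / ε)) ^ (k - 1) * hNorm x) ∧
      (∀ x, hNorm x ≤ γ * (max 1 ε) ^ (k - 1) * p x) ∧
      (∀ B : Matrix (Fin n) (Fin n) ℂ,
        opNormWrt p B ≤ γ ^ 2 * (max ε (1 / ε)) ^ (k - 1) * opNormWrt hNorm B) ∧
      (∀ B : Matrix (Fin n) (Fin n) ℂ,
        opNormWrt hNorm B ≤ γ ^ 2 * (max ε (1 / ε)) ^ (k - 1) * opNormWrt p B) ∧
      specRad A ≤ opNormWrt p A ∧
      opNormWrt p A ≤ specRad A + (if k = 1 then 0 else 1) * ε ∧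
      (IsUnit A.det → (specRad A⁻¹)⁻¹ > (if k = 1 then 0 else 1) * ε →
        specRad A⁻¹ ≤ opNormWrt p A⁻¹ ∧
        opNormWrt p A⁻¹ ≤ ((specRad A⁻¹)⁻¹ - (if k = 1 then 0 else 1) * ε)⁻¹) := by
  obtain ⟨Γ, hΓ⟩ := exists_jordanAdaptedNorm_le A k
  refine ⟨max Γ 1, by positivity, fun ε hε => ?_⟩
  set γ := max Γ 1
  set p := jordanAdaptedNorm A k ε
  have hδ : 0 ≤ (if k = 1 then 0 else 1) * ε := mul_nonneg (by split_ifs <;> norm_num) hε.le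
  have hp : IsNormOn p := isNormOn_jordanAdaptedNorm hk.1.1 hε
  have hp_le (x : Fin n → ℂ) : p x ≤ γ * max 1 ε⁻¹ ^ (k - 1) * hNorm x :=
    (hΓ ε hε x).trans <| mul_le_mul_of_nonneg_right
      (mul_le_mul_of_nonneg_right (le_max_left Γ 1) (by positivity)) (norm_nonneg x)
  have hh_le (x : Fin n → ℂ) : hNorm x ≤ γ * max 1 ε ^ (k - 1) * p x :=
    (hNorm_le_jordanAdaptedNorm hk.1.1 hε x).trans <| le_mul_of_one_le_left (hp.1 x) <|
      one_le_mul_of_one_le_of_one_le (le_max_right _ _) (one_le_pow₀ (le_max_left _ _))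
  have hbdd := exists_mulVec_le_of_le_hNorm (by positivity) hp_le hh_le
  have hγ : γ * max 1 ε⁻¹ ^ (k - 1) * (γ * max 1 ε ^ (k - 1)) = γ ^ 2 * max ε ε⁻¹ ^ (k - 1) := by
    rw [← max_one_inv_mul_max_one hε, mul_pow]
    ring
  simp only [one_div]
  refine ⟨p, hp, hp_le, hh_le, fun B => ?_, fun B => ?_, specRad_le_opNormWrt hp (hbdd A),
    opNormWrt_le hp (add_nonneg (specRad_nonneg A) hδ) (jordanAdaptedNorm_mulVec_le hk hε),
    fun hA hgt => ⟨specRad_le_opNormWrt hp (hbdd _), ?_⟩⟩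
  · rw [← hγ]
    exact opNormWrt_le_mul_opNormWrt hp isNormOn_hNorm (by positivity) (by positivity) hp_le hh_le
      ((exists_hNorm_mulVec_le B).imp fun _ h => h.2)
  · rw [← hγ, mul_comm (γ * _)]
    exact opNormWrt_le_mul_opNormWrt isNormOn_hNorm hp (by positivity) (by positivity) hh_le hp_le
      (hbdd B)
  · exact opNormWrt_nonsing_inv_le hp hA (sub_pos.2 hgt)
      (le_jordanAdaptedNorm_mulVec hk hε hA (inv_pos.1 (hδ.trans_lt hgt)))
end

section
/- Let A^∼ be an n×n complex matrix with spectral radius ρ_1 > 0 and maximal Jordan block size k, and let A(ν), ν = 0, 1, 2, …, be n×n complex matrices such that h^∼(A(ν) − A^∼) ≤ C₁/(ν+1) for all ν and some constant C₁ > 0. Then there exists a constant B > 0 such that for all ν ≥ 1, h^∼(A(ν−1)·A(ν−2)·…·A(1)·A(0)) ≤ ρ_1^ν · exp(B·(ν^{1−1/k} + ln(eν))). -/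
open Matrix

/-!
Write `a = A∼`, `b ν = A(ν)` and `r = 1 - 1/k`. On the generalized eigenspace of `a` for an
eigenvalue `μ` we have `(a - μ) ^ k = 0`, so expanding `(μ + (a - μ)) ^ m` binomially gives
`‖a ^ m x‖ ≤ C_x (m + 1) ^ (k - 1) ρ ^ m`. These eigenspaces span `ℂⁿ`, and Banach–Steinhaus makes
the constant uniform: `‖a ^ m‖ ≤ C (m + 1) ^ (k - 1) ρ ^ m`.

Next, by induction on `ν` and simultaneously for all `m`,
`‖a ^ m b(ν-1) ⋯ b(0)‖ ≤ M exp (c ∑_{j<ν} (j + 1) ^ (r - 1)) ρ ^ (ν + m) exp (2 (ν + m + 1) ^ r)`.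
Splitting `b ν = a + (b ν - a)`, the perturbation costs a factor `(m + 1) ^ (k - 1) / (ν + 1)`,
and the weight `exp (2 t ^ r)` absorbs `(m + 1) ^ (k - 1)` at the price of a factor `(ν + 1) ^ r`:
by concavity `(N + s) ^ r - N ^ r ≥ r x` with `x = s (N + s) ^ (r - 1)`, and
`s ^ (k - 1) = x ^ (k - 1) (N + s) ^ r` exactly because `r = 1 - 1/k`. Finally
`∑_{j<ν} (j + 1) ^ (r - 1)` is at most `ν ^ r / r` for `k ≥ 2` and the harmonic number for `k = 1`.
-/

open Finset Real
open scoped Nat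

theorem mul_mul_rpow_sub_one_le_rpow_add_sub_rpow {r N s : ℝ} (hr₀ : 0 ≤ r) (hr₁ : r ≤ 1)
    (hN : 0 ≤ N) (hs : 0 < s) :
    r * s * (N + s) ^ (r - 1) ≤ (N + s) ^ r - N ^ r := by
  have ht : 0 < N + s := by linarith
  have hbern := rpow_one_add_le_one_add_mul_self (s := -(s / (N + s)))
    (by rw [neg_le_neg_iff, div_le_one ht]; linarith) hr₀ hr₁
  rw [show 1 + -(s / (N + s)) = N / (N + s) by field_simp; ring, div_rpow hN ht.le,
    div_le_iff₀ (rpow_pos_of_pos ht r)] at hbern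
  rw [rpow_sub_one ht.ne']
  have : (1 + r * -(s / (N + s))) * (N + s) ^ r =
      (N + s) ^ r - r * s * ((N + s) ^ r / (N + s)) := by ring
  linarith

theorem mul_sum_rpow_sub_one_le {r : ℝ} (hr₀ : 0 ≤ r) (hr₁ : r ≤ 1) (ν : ℕ) :
    r * ∑ j ∈ range ν, ((j : ℝ) + 1) ^ (r - 1) ≤ (ν : ℝ) ^ r := by
  induction ν with
  | zero => simpa using rpow_nonneg le_rfl r
  | succ ν ih =>
    have := mul_mul_rpow_sub_one_le_rpow_add_sub_rpow hr₀ hr₁ ν.cast_nonneg one_pos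
    rw [sum_range_succ, mul_add]
    push_cast
    linarith

theorem sum_rpow_sub_one_le {k : ℕ} (hk : 0 < k) (ν : ℕ) :
    ∑ j ∈ range ν, ((j : ℝ) + 1) ^ (1 - 1 / (k : ℝ) - 1) ≤
      2 * (ν : ℝ) ^ (1 - 1 / (k : ℝ)) + (1 + log ν) := by
  obtain rfl | hk₂ := (Nat.one_le_iff_ne_zero.mpr hk.ne').eq_or_lt
  · have hH : ∑ j ∈ range ν, ((j : ℝ) + 1) ^ (-1 : ℝ) = harmonic ν := by
      simp [harmonic, rpow_neg_one]
    norm_num [hH]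
    linarith [harmonic_le_one_add_log ν]
  · have hr : 1 / 2 ≤ 1 - 1 / (k : ℝ) := by
      have : 1 / (k : ℝ) ≤ 1 / 2 := one_div_le_one_div_of_le two_pos (by exact_mod_cast hk₂)
      linarith
    have hS : 0 ≤ ∑ j ∈ range ν, ((j : ℝ) + 1) ^ (1 - 1 / (k : ℝ) - 1) :=
      sum_nonneg fun j _ => rpow_nonneg (by positivity) _
    nlinarith [log_natCast_nonneg ν, mul_sum_rpow_sub_one_le (r := 1 - 1 / (k : ℝ))
      (by linarith) (sub_le_self 1 (by positivity)) ν]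

theorem one_le_two_mul_one_sub_one_div_pow (k : ℕ) :
    1 ≤ (2 * (1 - 1 / ((k : ℝ) + 1))) ^ k := by
  rcases k.eq_zero_or_pos with rfl | hk
  · simp
  · apply one_le_pow₀
    have : (1 : ℝ) ≤ k := by exact_mod_cast hk
    rw [mul_sub, mul_one, le_sub_comm, mul_one_div, div_le_iff₀ (by positivity)]
    linarith

theorem pow_mul_exp_le {k : ℕ} (hk : 0 < k) {N s : ℝ} (hN : 0 ≤ N) (hs : 0 < s) :
    s ^ (k - 1) * exp (2 * N ^ (1 - 1 / (k : ℝ))) ≤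
      2 ^ k * (k - 1)! * max 1 (N ^ (1 - 1 / (k : ℝ))) *
        exp (2 * (N + s) ^ (1 - 1 / (k : ℝ))) := by
  obtain ⟨j, rfl⟩ : ∃ j, k = j + 1 := ⟨k - 1, by omega⟩
  simp only [Nat.add_sub_cancel, Nat.cast_add, Nat.cast_one]
  set r : ℝ := 1 - 1 / ((j : ℝ) + 1) with hr
  clear_value r
  have ht : 0 < N + s := by linarith
  have hr₀ : 0 ≤ r := by rw [hr, sub_nonneg, div_le_one (by positivity)]; simp
  obtain ⟨x, hx_def⟩ : ∃ x, x = s * (N + s) ^ (r - 1) := ⟨_, rfl⟩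
  obtain ⟨Δ, hΔ_def⟩ : ∃ Δ, Δ = (N + s) ^ r - N ^ r := ⟨_, rfl⟩
  have hx : 0 ≤ x := by rw [hx_def]; positivity
  have hxΔ : r * x ≤ Δ := by
    rw [hx_def, hΔ_def, ← mul_assoc]
    exact mul_mul_rpow_sub_one_le_rpow_add_sub_rpow hr₀ (hr ▸ sub_le_self _ (by positivity))
      hN hs
  have hΔ : 0 ≤ Δ := (mul_nonneg hr₀ hx).trans hxΔ
  have hsplit : s ^ j = x ^ j * (N + s) ^ r := by
    have hexp : (r - 1) * j + r = 0 := by rw [hr]; field_simp; ring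
    rw [hx_def, mul_pow, mul_assoc, ← rpow_natCast ((N + s) ^ (r - 1)), ← rpow_mul ht.le,
      ← rpow_add ht, hexp, rpow_zero, mul_one]
  have hxj : x ^ j ≤ 2 ^ j * j ! * exp Δ := calc
    x ^ j ≤ (2 * r) ^ j * x ^ j :=
      le_mul_of_one_le_left (by positivity) (hr ▸ one_le_two_mul_one_sub_one_div_pow j)
    _ = 2 ^ j * (r * x) ^ j := by ring
    _ ≤ 2 ^ j * (j ! * exp (r * x)) := by
      gcongr
      rw [← div_le_iff₀' (by positivity)]
      exact pow_div_factorial_le_exp _ (by positivity) j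
    _ ≤ 2 ^ j * j ! * exp Δ := by rw [← mul_assoc]; gcongr
  have hNs : (N + s) ^ r ≤ 2 * max 1 (N ^ r) * exp Δ := calc
    (N + s) ^ r = N ^ r + Δ := by rw [hΔ_def]; ring
    _ ≤ 2 * max 1 (N ^ r) * (Δ + 1) := by
      nlinarith [le_max_left 1 (N ^ r), le_max_right 1 (N ^ r)]
    _ ≤ 2 * max 1 (N ^ r) * exp Δ := by gcongr; exact add_one_le_exp Δ
  calc s ^ j * exp (2 * N ^ r) = x ^ j * (N + s) ^ r * exp (2 * N ^ r) := by rw [hsplit]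
    _ ≤ (2 ^ j * j ! * exp Δ) * (2 * max 1 (N ^ r) * exp Δ) * exp (2 * N ^ r) := by gcongr
    _ = 2 ^ (j + 1) * j ! * max 1 (N ^ r) * exp (2 * (N + s) ^ r) := by
      rw [show 2 * (N + s) ^ r = Δ + Δ + 2 * N ^ r by rw [hΔ_def]; ring, exp_add, exp_add]
      ring

theorem norm_pow_apply_le_of_pow_sub_smul_apply_eq_zero {𝕜 V : Type*} [NormedField 𝕜]
    [SeminormedAddCommGroup V] [NormedSpace 𝕜 V] {f : Module.End 𝕜 V} {μ : 𝕜} {ρ : ℝ} {k : ℕ}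
    {x : V} (hρ : 0 < ρ) (hμ : ‖μ‖ ≤ ρ) (hx : ((f - μ • 1) ^ k) x = 0) (m : ℕ) :
    ‖(f ^ m) x‖ ≤
      (∑ i ∈ range k, ρ⁻¹ ^ i * ‖((f - μ • 1) ^ i) x‖) * (((m : ℝ) + 1) ^ (k - 1) * ρ ^ m) := by
  set u := f - μ • 1 with hu
  have hvanish : ∀ i, k ≤ i → (u ^ i) x = 0 := fun i hi => by
    rw [← Nat.sub_add_cancel hi, pow_add, Module.End.mul_apply, hx, map_zero]
  have hexpand : (f ^ m) x = ∑ i ∈ range (m + 1), m.choose i • μ ^ (m - i) • (u ^ i) x := by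
    rw [show f = u + μ • 1 by rw [hu, sub_add_cancel], ((Commute.one_right u).smul_right μ).add_pow,
      LinearMap.sum_apply]
    refine sum_congr rfl fun i _ => ?_
    simp [smul_pow, smul_comm (μ ^ (m - i))]
  set w := ((m : ℝ) + 1) ^ (k - 1) * ρ ^ m
  have hterm : ∀ i ∈ range (m + 1),
      ‖m.choose i • μ ^ (m - i) • (u ^ i) x‖ ≤ ρ⁻¹ ^ i * ‖(u ^ i) x‖ * w := by
    intro i hi
    rcases le_or_gt k i with hki | hik
    · rw [hvanish i hki]; simp
    have hchoose : (m.choose i : ℝ) ≤ ((m : ℝ) + 1) ^ (k - 1) := by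
      exact_mod_cast (m.choose_le_pow i).trans <|
        (Nat.pow_le_pow_left m.le_succ i).trans (Nat.pow_le_pow_right m.succ_pos (by omega))
    have hρpow : ρ ^ (m - i) = ρ⁻¹ ^ i * ρ ^ m := by
      rw [pow_sub₀ _ hρ.ne' (by simpa [Nat.lt_succ_iff] using hi), inv_pow, mul_comm]
    calc ‖m.choose i • μ ^ (m - i) • (u ^ i) x‖
        ≤ m.choose i * (‖μ‖ ^ (m - i) * ‖(u ^ i) x‖) := by
          refine norm_nsmul_le.trans ?_
          rw [norm_smul, norm_pow]
      _ ≤ ((m : ℝ) + 1) ^ (k - 1) * (ρ ^ (m - i) * ‖(u ^ i) x‖) := by gcongr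
      _ = ρ⁻¹ ^ i * ‖(u ^ i) x‖ * w := by rw [hρpow]; ring
  have htail : ∑ i ∈ range (m + 1), ρ⁻¹ ^ i * ‖(u ^ i) x‖ ≤
      ∑ i ∈ range k, ρ⁻¹ ^ i * ‖(u ^ i) x‖ := by
    rw [← sum_filter_of_ne (p := (· < k)) fun i _ hne => by
      by_contra hik
      exact hne (by rw [hvanish i (not_lt.mp hik), norm_zero, mul_zero])]
    exact sum_le_sum_of_subset_of_nonneg (fun i => by simp) fun _ _ _ => by positivity
  calc ‖(f ^ m) x‖ ≤ ∑ i ∈ range (m + 1), ρ⁻¹ ^ i * ‖(u ^ i) x‖ * w := by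
        rw [hexpand]; exact norm_sum_le_of_le _ hterm
    _ = (∑ i ∈ range (m + 1), ρ⁻¹ ^ i * ‖(u ^ i) x‖) * w := by rw [sum_mul]
    _ ≤ (∑ i ∈ range k, ρ⁻¹ ^ i * ‖(u ^ i) x‖) * w := by gcongr

theorem exists_norm_toContinuousLinearMap_pow_le {V : Type*} [NormedAddCommGroup V]
    [NormedSpace ℂ V] [FiniteDimensional ℂ V] {f : Module.End ℂ V} {ρ : ℝ} {k : ℕ} (hρ : 0 < ρ)
    (heig : ∀ μ, f.HasEigenvalue μ → ‖μ‖ ≤ ρ)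
    (hk : ∀ μ, f.HasEigenvalue μ → f.maxGenEigenspace μ ≤ LinearMap.ker ((f - μ • 1) ^ k)) :
    ∃ C, ∀ m : ℕ,
      ‖LinearMap.toContinuousLinearMap (f ^ m)‖ ≤ C * (((m : ℝ) + 1) ^ (k - 1) * ρ ^ m) := by
  have := FiniteDimensional.complete ℂ V
  set w : ℕ → ℝ := fun m => ((m : ℝ) + 1) ^ (k - 1) * ρ ^ m
  have hw : ∀ m, 0 < w m := fun m => by positivity
  have horbit : ∀ x, ∃ C, ∀ m, ‖(f ^ m) x‖ ≤ C * w m := by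
    intro x
    have hx : x ∈ ⨆ μ, f.maxGenEigenspace μ := by
      rw [Module.End.iSup_maxGenEigenspace_eq_top]; trivial
    refine Submodule.iSup_induction (motive := fun x => ∃ C, ∀ m, ‖(f ^ m) x‖ ≤ C * w m) _ hx
      (fun μ x hx => ?_) ⟨0, by simp⟩ fun x y ⟨C, hC⟩ ⟨D, hD⟩ =>
        ⟨C + D, fun m => by rw [map_add, add_mul]; exact norm_add_le_of_le (hC m) (hD m)⟩
    rcases eq_or_ne x 0 with rfl | hx₀
    · exact ⟨0, by simp⟩
    have hμ : f.HasEigenvalue μ := by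
      obtain ⟨j, hj⟩ := (Module.End.mem_maxGenEigenspace f μ x).mp hx
      exact Module.End.hasEigenvalue_of_hasGenEigenvalue (k := j)
        ((Submodule.ne_bot_iff _).mpr ⟨x, Module.End.mem_genEigenspace_nat.mpr hj, hx₀⟩)
    exact ⟨_, norm_pow_apply_le_of_pow_sub_smul_apply_eq_zero hρ (heig μ hμ) (hk μ hμ hx)⟩
  obtain ⟨C, hC⟩ := banach_steinhaus
    (g := fun m => LinearMap.toContinuousLinearMap (((w m)⁻¹ : ℂ) • f ^ m)) fun x => by
      obtain ⟨C, hC⟩ := horbit x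
      refine ⟨C, fun m => ?_⟩
      rw [LinearMap.coe_toContinuousLinearMap', LinearMap.smul_apply, norm_smul, norm_inv,
        Complex.norm_of_nonneg (hw m).le, inv_mul_le_iff₀ (hw m), mul_comm]
      exact hC m
  refine ⟨C, fun m => ?_⟩
  have hm := hC m
  rwa [map_smul, norm_smul, norm_inv, Complex.norm_of_nonneg (hw m).le, inv_mul_le_iff₀ (hw m),
    mul_comm] at hm

theorem Module.End.maxGenEigenspace_le_ker_of_ker_pow_eq {K V : Type*} [Field K] [AddCommGroup V]
    [Module K V] {f : Module.End K V} {μ : K} {k : ℕ}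
    (h : LinearMap.ker ((f - μ • 1) ^ k) = LinearMap.ker ((f - μ • 1) ^ (k + 1))) :
    f.maxGenEigenspace μ ≤ LinearMap.ker ((f - μ • 1) ^ k) := by
  intro x hx
  obtain ⟨j, hj⟩ := (mem_maxGenEigenspace f μ x).mp hx
  rw [ker_pow_constant h j, LinearMap.mem_ker, pow_add, Module.End.mul_apply, hj, map_zero]

theorem norm_le_specRad_of_isRoot {n : ℕ} {A : Matrix (Fin n) (Fin n) ℂ} {μ : ℂ}
    (hμ : A.charpoly.IsRoot μ) :
    ‖μ‖ ≤ specRad A := by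
  refine le_csSup ?_ ⟨μ, hμ, rfl⟩
  have hfin := (Polynomial.finite_setOfPred_isRoot A.charpoly_monic.ne_zero).image (‖·‖)
  refine (hfin.subset ?_).bddAbove
  rintro _ ⟨ν, hν, rfl⟩
  exact ⟨ν, hν, rfl⟩

section LinftyOpNorm

attribute [local instance] Matrix.linftyOpNormedRing

theorem opNormWrt_hNorm_eq_linfty_opNorm {n : ℕ} (M : Matrix (Fin n) (Fin n) ℂ) :
    opNormWrt hNorm M = ‖M‖ := by
  rw [linfty_opNorm_eq_opNorm, ← ContinuousLinearMap.sSup_unitClosedBall_eq_norm]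
  unfold opNormWrt
  congr 1
  ext c
  simp [hNorm, eq_comm]

theorem Matrix.exists_linfty_opNorm_pow_le {ι : Type*} [Fintype ι] [DecidableEq ι]
    {A : Matrix ι ι ℂ} {ρ : ℝ} {k : ℕ} (hρ : 0 < ρ)
    (heig : ∀ μ, A.charpoly.IsRoot μ → ‖μ‖ ≤ ρ)
    (hk : ∀ μ, A.charpoly.IsRoot μ → LinearMap.ker (mulVecLin ((A - μ • 1) ^ k)) =
      LinearMap.ker (mulVecLin ((A - μ • 1) ^ (k + 1)))) :
    ∃ C, ∀ m : ℕ, ‖A ^ m‖ ≤ C * ((m : ℝ) + 1) ^ (k - 1) * ρ ^ m := by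
  have hroot (μ : ℂ) : Module.End.HasEigenvalue (toLin' A) μ ↔ A.charpoly.IsRoot μ := by
    rw [Module.End.hasEigenvalue_iff_isRoot_charpoly, Matrix.charpoly_toLin']
  have hlin (μ : ℂ) (j : ℕ) : mulVecLin ((A - μ • 1) ^ j) = (toLin' A - μ • 1) ^ j := by
    rw [← toLin'_apply', toLin'_pow, map_sub, map_smul, toLin'_one]
    rfl
  obtain ⟨C, hC⟩ := exists_norm_toContinuousLinearMap_pow_le hρ
    (fun μ h => heig μ ((hroot μ).mp h)) fun μ h =>
      Module.End.maxGenEigenspace_le_ker_of_ker_pow_eq <| by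
        rw [← hlin, ← hlin]; exact hk μ ((hroot μ).mp h)
  refine ⟨C, fun m => ?_⟩
  rw [linfty_opNorm_eq_opNorm, mul_assoc]
  convert hC m using 2
  refine ContinuousLinearMap.ext fun x => ?_
  simp [← toLin'_pow]

end LinftyOpNorm

theorem List.prod_map_range_succ_reverse {M : Type*} [Monoid M] (b : ℕ → M) (ν : ℕ) :
    ((List.range (ν + 1)).reverse.map b).prod = b ν * ((List.range ν).reverse.map b).prod := by
  simp [List.range_succ]

section ProductGrowth

variable {R : Type*} [NormedRing R] {k : ℕ} {ρ C₁ C₂ : ℝ} {a : R}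

theorem norm_pow_mul_mul_le (hk : 0 < k) (hρ : 0 < ρ)
    (hpow : ∀ m : ℕ, ‖a ^ m‖ ≤ C₂ * ((m : ℝ) + 1) ^ (k - 1) * ρ ^ m)
    {b p : R} {ν : ℕ} {L : ℝ} (hb : ‖b - a‖ ≤ C₁ / ((ν : ℝ) + 1))
    (hp : ∀ m : ℕ, ‖a ^ m * p‖ ≤
      L * ρ ^ (ν + m) * exp (2 * ((ν + m + 1 : ℕ) : ℝ) ^ (1 - 1 / (k : ℝ))))
    (m : ℕ) :
    ‖a ^ m * (b * p)‖ ≤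
      exp (2 ^ k * (k - 1)! * C₁ * C₂ / ρ * ((ν : ℝ) + 1) ^ (1 - 1 / (k : ℝ) - 1)) * L *
        ρ ^ (ν + 1 + m) * exp (2 * ((ν + 1 + m + 1 : ℕ) : ℝ) ^ (1 - 1 / (k : ℝ))) := by
  set r := 1 - 1 / (k : ℝ) with hr
  have hr₀ : 0 ≤ r := by rw [hr, sub_nonneg, div_le_one (by positivity)]; exact_mod_cast hk
  set K : ℝ := 2 ^ k * (k - 1)!
  set c := K * C₁ * C₂ / ρ with hc
  have hC₁ : 0 ≤ C₁ / ((ν : ℝ) + 1) := (norm_nonneg _).trans hb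
  have hC₂ : 0 ≤ C₂ := by simpa using (norm_nonneg _).trans (hpow 0)
  have hp₀ : ‖p‖ ≤ L * ρ ^ ν * exp (2 * ((ν : ℝ) + 1) ^ r) := by simpa using hp 0
  have hL : 0 ≤ L := nonneg_of_mul_nonneg_left
    (nonneg_of_mul_nonneg_left ((norm_nonneg _).trans hp₀) (exp_pos _)) (by positivity)
  obtain ⟨X, hX⟩ : ∃ X, X = L * ρ ^ (ν + 1 + m) * exp (2 * ((ν + 1 + m + 1 : ℕ) : ℝ) ^ r) :=
    ⟨_, rfl⟩
  have hmain : ‖a ^ (m + 1) * p‖ ≤ X := by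
    rw [hX, show ν + 1 + m = ν + (m + 1) by omega]; exact hp (m + 1)
  have hweight : ((m : ℝ) + 1) ^ (k - 1) * exp (2 * ((ν : ℝ) + 1) ^ r) ≤
      K * ((ν : ℝ) + 1) ^ r * exp (2 * ((ν + 1 + m + 1 : ℕ) : ℝ) ^ r) := by
    have := pow_mul_exp_le hk (N := ν + 1) (s := m + 1) (by positivity) (by positivity)
    rwa [max_eq_right (one_le_rpow (by linarith [ν.cast_nonneg (α := ℝ)]) hr₀),
      show (ν : ℝ) + 1 + ((m : ℝ) + 1) = ((ν + 1 + m + 1 : ℕ) : ℝ) by push_cast; ring] at this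
  have hperturb : ‖a ^ m * (b - a) * p‖ ≤ c * ((ν : ℝ) + 1) ^ (r - 1) * X := calc
    ‖a ^ m * (b - a) * p‖ ≤ ‖a ^ m‖ * ‖b - a‖ * ‖p‖ := norm_mul₃_le
    _ ≤ (C₂ * ((m : ℝ) + 1) ^ (k - 1) * ρ ^ m) * (C₁ / ((ν : ℝ) + 1)) *
        (L * ρ ^ ν * exp (2 * ((ν : ℝ) + 1) ^ r)) := by
      gcongr
      exact hpow m
    _ = C₂ * (C₁ / ((ν : ℝ) + 1)) * L * ρ ^ (ν + m) *
        (((m : ℝ) + 1) ^ (k - 1) * exp (2 * ((ν : ℝ) + 1) ^ r)) := by rw [pow_add]; ring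
    _ ≤ C₂ * (C₁ / ((ν : ℝ) + 1)) * L * ρ ^ (ν + m) *
        (K * ((ν : ℝ) + 1) ^ r * exp (2 * ((ν + 1 + m + 1 : ℕ) : ℝ) ^ r)) := by gcongr
    _ = c * ((ν : ℝ) + 1) ^ (r - 1) * X := by
      rw [hX, hc, rpow_sub_one (by positivity), show ν + 1 + m = ν + m + 1 by omega, pow_succ]
      field_simp
  have hsplit : a ^ m * (b * p) = a ^ (m + 1) * p + a ^ m * (b - a) * p := by
    rw [pow_succ]; noncomm_ring
  have hX₀ : 0 ≤ X := (norm_nonneg _).trans hmain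
  calc ‖a ^ m * (b * p)‖ ≤ X + c * ((ν : ℝ) + 1) ^ (r - 1) * X := by
        rw [hsplit]; exact norm_add_le_of_le hmain hperturb
    _ = (c * ((ν : ℝ) + 1) ^ (r - 1) + 1) * X := by ring
    _ ≤ exp (c * ((ν : ℝ) + 1) ^ (r - 1)) * X := by gcongr; exact add_one_le_exp _
    _ = _ := by rw [hX]; ring

theorem norm_pow_mul_prod_le (hk : 0 < k) (hρ : 0 < ρ)
    (hpow : ∀ m : ℕ, ‖a ^ m‖ ≤ C₂ * ((m : ℝ) + 1) ^ (k - 1) * ρ ^ m)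
    {b : ℕ → R} (hb : ∀ ν : ℕ, ‖b ν - a‖ ≤ C₁ / ((ν : ℝ) + 1)) (ν m : ℕ) :
    ‖a ^ m * ((List.range ν).reverse.map b).prod‖ ≤
      2 ^ k * (k - 1)! * C₂ *
        exp (2 ^ k * (k - 1)! * C₁ * C₂ / ρ *
          ∑ j ∈ range ν, ((j : ℝ) + 1) ^ (1 - 1 / (k : ℝ) - 1)) *
        ρ ^ (ν + m) * exp (2 * ((ν + m + 1 : ℕ) : ℝ) ^ (1 - 1 / (k : ℝ))) := by
  induction ν generalizing m with
  | zero =>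
    have hC₂ : 0 ≤ C₂ := by simpa using (norm_nonneg _).trans (hpow 0)
    have hweight := pow_mul_exp_le hk le_rfl (s := (m : ℝ) + 1) (by positivity)
    rw [max_eq_left (zero_rpow_le_one _), zero_add, mul_one] at hweight
    simp only [List.range_zero, List.reverse_nil, List.map_nil, List.prod_nil, mul_one,
      sum_range_zero, mul_zero, exp_zero, zero_add]
    calc ‖a ^ m‖ ≤ C₂ * ((m : ℝ) + 1) ^ (k - 1) * ρ ^ m := hpow m
      _ ≤ C₂ * (((m : ℝ) + 1) ^ (k - 1) * exp (2 * 0 ^ (1 - 1 / (k : ℝ)))) * ρ ^ m := by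
        gcongr
        exact le_mul_of_one_le_right (by positivity) (one_le_exp (by positivity))
      _ ≤ C₂ * (2 ^ k * (k - 1)! * exp (2 * ((m : ℝ) + 1) ^ (1 - 1 / (k : ℝ)))) * ρ ^ m := by
        gcongr
      _ = _ := by push_cast; ring
  | succ ν ih =>
    rw [List.prod_map_range_succ_reverse, sum_range_succ, mul_add, exp_add]
    refine (norm_pow_mul_mul_le hk hρ hpow (hb ν) ih m).trans (le_of_eq ?_)
    ring

theorem exists_norm_prod_le_pow_mul_exp (hk : 0 < k) (hρ : 0 < ρ)
    (hpow : ∀ m : ℕ, ‖a ^ m‖ ≤ C₂ * ((m : ℝ) + 1) ^ (k - 1) * ρ ^ m)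
    {b : ℕ → R} (hb : ∀ ν : ℕ, ‖b ν - a‖ ≤ C₁ / ((ν : ℝ) + 1)) :
    ∃ B : ℝ, 0 < B ∧ ∀ ν : ℕ, 1 ≤ ν →
      ‖((List.range ν).reverse.map b).prod‖ ≤
        ρ ^ ν * exp (B * ((ν : ℝ) ^ (1 - 1 / (k : ℝ)) + log (exp 1 * ν))) := by
  have hC₁ : 0 ≤ C₁ := by simpa using (norm_nonneg _).trans (hb 0)
  have hC₂ : 0 ≤ C₂ := by simpa using (norm_nonneg _).trans (hpow 0)
  set r := 1 - 1 / (k : ℝ) with hr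
  have hr₀ : 0 ≤ r := by rw [hr, sub_nonneg, div_le_one (by positivity)]; exact_mod_cast hk
  set M : ℝ := 2 ^ k * (k - 1)! * C₂
  set c : ℝ := 2 ^ k * (k - 1)! * C₁ * C₂ / ρ
  have hM : 0 ≤ M := by positivity
  have hc : 0 ≤ c := by positivity
  refine ⟨M + 4 + 2 * c, by positivity, fun ν hν => ?_⟩
  have hν₀ : (0 : ℝ) ≤ ν := ν.cast_nonneg
  have hνr : 0 ≤ (ν : ℝ) ^ r := rpow_nonneg hν₀ r
  have hlog : 0 ≤ log ν := log_natCast_nonneg ν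
  have hsucc : ((ν + 1 : ℕ) : ℝ) ^ r ≤ 2 * (ν : ℝ) ^ r := calc
    ((ν + 1 : ℕ) : ℝ) ^ r ≤ (2 * ν) ^ r := by
      gcongr; push_cast; linarith [(Nat.one_le_cast (α := ℝ)).mpr hν]
    _ = 2 ^ r * (ν : ℝ) ^ r := mul_rpow zero_le_two hν₀
    _ ≤ 2 * (ν : ℝ) ^ r := by
      gcongr
      have := rpow_le_rpow_of_exponent_le one_le_two (sub_le_self 1 (by positivity) : r ≤ 1)
      rwa [rpow_one] at this
  have hS := mul_le_mul_of_nonneg_left (sum_rpow_sub_one_le hk ν) hc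
  have hexp : M + (c * ∑ j ∈ range ν, ((j : ℝ) + 1) ^ (r - 1) + 2 * ((ν + 1 : ℕ) : ℝ) ^ r) ≤
      (M + 4 + 2 * c) * ((ν : ℝ) ^ r + log (exp 1 * ν)) := by
    rw [log_mul (exp_ne_zero 1) (by positivity), log_exp]
    nlinarith [mul_nonneg hM hνr, mul_nonneg hM hlog, mul_nonneg hc hlog]
  calc ‖((List.range ν).reverse.map b).prod‖
      ≤ M * exp (c * ∑ j ∈ range ν, ((j : ℝ) + 1) ^ (r - 1)) * ρ ^ ν *
          exp (2 * ((ν + 1 : ℕ) : ℝ) ^ r) := by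
        simpa only [pow_zero, one_mul, add_zero] using norm_pow_mul_prod_le hk hρ hpow hb ν 0
    _ = ρ ^ ν * (M * (exp (c * ∑ j ∈ range ν, ((j : ℝ) + 1) ^ (r - 1)) *
          exp (2 * ((ν + 1 : ℕ) : ℝ) ^ r))) := by ring
    _ ≤ ρ ^ ν * (exp M * (exp (c * ∑ j ∈ range ν, ((j : ℝ) + 1) ^ (r - 1)) *
          exp (2 * ((ν + 1 : ℕ) : ℝ) ^ r))) := by
        gcongr; linarith [add_one_le_exp M]
    _ ≤ _ := by
        rw [← exp_add, ← exp_add]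
        gcongr

end ProductGrowth

theorem matrix_product_growth_bound_general
    (n k : ℕ) (Asim : Matrix (Fin n) (Fin n) ℂ) (ρ₁ : ℝ)
    (hρ₁ : specRad Asim = ρ₁) (hρpos : 0 < ρ₁)
    (hk : IsMaxJordanSize Asim k)
    (A : ℕ → Matrix (Fin n) (Fin n) ℂ) (C₁ : ℝ)
    (hA : ∀ ν : ℕ, opNormWrt hNorm (A ν - Asim) ≤ C₁ / ((ν : ℝ) + 1)) :
    ∃ B : ℝ, 0 < B ∧ ∀ ν : ℕ, 1 ≤ ν →
      opNormWrt hNorm (((List.range ν).reverse.map A).prod) ≤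
        ρ₁ ^ ν * Real.exp (B * ((ν : ℝ) ^ (1 - 1 / (k : ℝ)) +
          Real.log (Real.exp 1 * (ν : ℝ)))) := by
  obtain ⟨⟨hk₀, hstab⟩, -⟩ := hk
  let _ := Matrix.linftyOpNormedRing (n := Fin n) (α := ℂ)
  obtain ⟨C₂, hpow⟩ := Matrix.exists_linfty_opNorm_pow_le hρpos
    (fun μ hμ => hρ₁ ▸ norm_le_specRad_of_isRoot hμ) hstab
  obtain ⟨B, hB, hbound⟩ := exists_norm_prod_le_pow_mul_exp (b := A) hk₀ hρpos hpow
    fun ν => by rw [← opNormWrt_hNorm_eq_linfty_opNorm]; exact hA ν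
  exact ⟨B, hB, fun ν hν => by rw [opNormWrt_hNorm_eq_linfty_opNorm]; exact hbound ν hν⟩

/-- Growth estimate for products of matrices converging to `A∼`
at rate `O(1/(ν+1))`: `h^∼(A(ν−1)⋯A(0)) ≤ ρ₁^ν · exp(B(ν^{1−1/k} + ln(eν)))`. -/
theorem matrix_product_growth_bound
    (n k : ℕ) (Asim : Matrix (Fin n) (Fin n) ℂ) (ρ₁ : ℝ)
    (hρ₁ : specRad Asim = ρ₁) (hρpos : 0 < ρ₁)
    (hk : IsMaxJordanSize Asim k)
    (A : ℕ → Matrix (Fin n) (Fin n) ℂ) (C₁ : ℝ) (hC₁ : 0 < C₁)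
    (hA : ∀ ν : ℕ, opNormWrt hNorm (A ν - Asim) ≤ C₁ / ((ν : ℝ) + 1)) :
    ∃ B : ℝ, 0 < B ∧ ∀ ν : ℕ, 1 ≤ ν →
      opNormWrt hNorm (((List.range ν).reverse.map A).prod) ≤
        ρ₁ ^ ν * Real.exp (B * ((ν : ℝ) ^ (1 - 1 / (k : ℝ)) +
          Real.log (Real.exp 1 * (ν : ℝ)))) :=
  matrix_product_growth_bound_general n k Asim ρ₁ hρ₁ hρpos hk A C₁ hA
end

section
/- Let K be ℝ or ℂ, let L be a unital associative K-algebra, let m ∈ ℕ, n ∈ ℕ, and let a_k : {m, m+1, …} → L for k = 0, …, n be such that a_0(ν) is an invertible element of L for every ν ≥ m. Define the operator α on sequences y : {m, m+1, …} → L by (αy)(ν) = ∑_{k=0}^n a_k(ν)·y(ν+k). Then for every integer μ ≥ m, α maps the set N_μ = { y : {m, m+1, …} → L : y(ν) = 0 for all ν ≥ μ } bijectively onto N_μ. -/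
noncomputable def ysol {L : Type} [Ring L] (a : ℕ → ℕ → L) (b : ℕ → L) (n μ : ℕ) : ℕ → L :=
  fun ν =>
    if _h : μ ≤ ν then 0
    else Ring.inverse (a 0 ν) *
      (b ν - ∑ k ∈ (Finset.range n).attach, a (k.1 + 1) ν * ysol a b n μ (ν + (k.1 + 1)))
termination_by ν => μ - ν
decreasing_by omega

/-- Lemma 6. If the lowest coefficient `a₀(ν)` is invertible for
every `ν ≥ m`, then the difference operator `α` maps the set `N_μ` of sequences
vanishing from `μ` on bijectively onto `N_μ`. -/
theorem diff_operator_bijOn_eventually_zero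
    (K : Type) [RCLike K] (L : Type) [Ring L] [Algebra K L]
    (m n μ : ℕ) (hμ : m ≤ μ)
    (a : ℕ → ℕ → L)
    (ha0 : ∀ ν : ℕ, m ≤ ν → IsUnit (a 0 ν)) :
    Set.BijOn
      (fun (y : {ν : ℕ // m ≤ ν} → L) =>
        fun ν : {ν : ℕ // m ≤ ν} =>
          ∑ k ∈ Finset.range (n + 1),
            a k ν.1 * y ⟨ν.1 + k, ν.2.trans (Nat.le_add_right _ _)⟩)
      {y | ∀ ν : {ν : ℕ // m ≤ ν}, μ ≤ ν.1 → y ν = 0}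
      {y | ∀ ν : {ν : ℕ // m ≤ ν}, μ ≤ ν.1 → y ν = 0} := by
  refine ⟨?_, ?_, ?_⟩
  · -- MapsTo
    intro y hy ν hν
    refine Finset.sum_eq_zero fun k _hk => ?_
    rw [hy ⟨ν.1 + k, ν.2.trans (Nat.le_add_right _ _)⟩ (le_trans hν (Nat.le_add_right _ _)), mul_zero]
  · -- InjOn
    intro y hy z hz h
    have key : ∀ d (ν : {ν : ℕ // m ≤ ν}), μ - ν.1 ≤ d → y ν = z ν := by
      intro d
      induction d with
      | zero => intro ν hν; rw [hy ν (by omega), hz ν (by omega)]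
      | succ d ih =>
        intro ν hν
        by_cases hμν : μ ≤ ν.1
        · rw [hy ν hμν, hz ν hμν]
        · have h1 := congrFun h ν
          simp only at h1
          rw [Finset.sum_range_succ', Finset.sum_range_succ'] at h1
          have h2 : ∀ k ∈ Finset.range n,
              a (k + 1) ν.1 * y ⟨ν.1 + (k + 1), ν.2.trans (Nat.le_add_right _ _)⟩
                = a (k + 1) ν.1 * z ⟨ν.1 + (k + 1), ν.2.trans (Nat.le_add_right _ _)⟩ := by
            intro k _hk
            rw [ih ⟨ν.1 + (k + 1), ν.2.trans (Nat.le_add_right _ _)⟩ (show μ - (ν.1 + (k + 1)) ≤ d by omega)]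
          rw [Finset.sum_congr rfl h2] at h1
          have h3 := add_left_cancel h1
          have h4 := (ha0 ν.1 ν.2).mul_left_cancel h3
          simpa using h4
    funext ν
    exact key (μ - ν.1) ν le_rfl
  · -- SurjOn
    intro b hb
    set b' : ℕ → L := fun ν => if h : m ≤ ν then b ⟨ν, h⟩ else 0 with hb'
    refine ⟨fun ν => ysol a b' n μ ν.1, ?_, ?_⟩
    · intro ν hν
      show ysol a b' n μ ν.1 = 0
      rw [ysol.eq_def, dif_pos hν]
    · funext ν
      simp only
      by_cases hμν : μ ≤ ν.1
      · have : ∀ k ∈ Finset.range (n + 1),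
            a k ν.1 * ysol a b' n μ (ν.1 + k) = 0 := by
          intro k _hk
          rw [ysol.eq_def, dif_pos (by omega), mul_zero]
        rw [Finset.sum_congr rfl this, Finset.sum_const_zero, hb ν hμν]
      · rw [Finset.sum_range_succ']
        have hy0 : ysol a b' n μ (ν.1 + 0) =
            Ring.inverse (a 0 ν.1) *
              (b' ν.1 - ∑ k ∈ (Finset.range n).attach,
                a (k.1 + 1) ν.1 * ysol a b' n μ (ν.1 + (k.1 + 1))) := by
          rw [Nat.add_zero, ysol.eq_def, dif_neg hμν]
        rw [hy0, ← mul_assoc, Ring.mul_inverse_cancel _ (ha0 ν.1 ν.2), one_mul,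
          Finset.sum_attach (Finset.range n)
            (fun k => a (k + 1) ν.1 * ysol a b' n μ (ν.1 + (k + 1)))]
        have hbν : b' ν.1 = b ν := by rw [hb']; simp [ν.2]
        rw [hbν]
        abel
end

section
/- Let K be ℝ or ℂ, let L be a unital associative K-algebra, let m ∈ ℕ, n ∈ ℕ, and let a_k : {m, m+1, …} → L for k = 0, …, n be such that a_0(ν) is an invertible element of L for every ν ≥ m. Let μ ≥ m be an integer, let g : {m, m+1, …} → L, and let x : {μ, μ+1, …} → L satisfy g(ν) = ∑_{k=0}^n a_k(ν)·x(ν+k) for all ν ≥ μ. Then there exists a unique sequence y : {m, m+1, …} → L such that ∑_{k=0}^n a_k(ν)·y(ν+k) = g(ν) for all ν ≥ m and y(ν) = x(ν) for all ν ≥ μ. -/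
noncomputable def extSeq (L : Type) [Ring L] (n μ : ℕ) (a : ℕ → ℕ → L)
    (g x : ℕ → L) : ℕ → L
  | ν =>
    if _h : μ ≤ ν then x ν
    else Ring.inverse (a 0 ν) *
      (g ν - ∑ k ∈ Finset.range n, a (k + 1) ν * extSeq L n μ a g x (ν + k + 1))
  termination_by ν => μ - ν
  decreasing_by omega

/-- Corollary 1 of Lemma 6. If the lowest coefficient `a₀(ν)` is
invertible for every `ν ≥ m`, `g` is a sequence on `{m, m+1, …}` and `x` is a sequence
on `{μ, μ+1, …}` satisfying the inhomogeneous equation there, then `x` extends uniquely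
to a solution `y` on `{m, m+1, …}` of `α(y) = g`. -/
theorem diff_operator_unique_extension
    (K : Type) [RCLike K] (L : Type) [Ring L] [Algebra K L]
    (m n μ : ℕ) (hμ : m ≤ μ)
    (a : ℕ → ℕ → L)
    (ha0 : ∀ ν : ℕ, m ≤ ν → IsUnit (a 0 ν))
    (g : {ν : ℕ // m ≤ ν} → L) (x : {ν : ℕ // μ ≤ ν} → L)
    (hgx : ∀ ν : {ν : ℕ // μ ≤ ν},
      g ⟨ν.1, hμ.trans ν.2⟩ =
        ∑ k ∈ Finset.range (n + 1),
          a k ν.1 * x ⟨ν.1 + k, ν.2.trans (Nat.le_add_right _ _)⟩) :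
    ∃! y : {ν : ℕ // m ≤ ν} → L,
      (∀ ν : {ν : ℕ // m ≤ ν},
        ∑ k ∈ Finset.range (n + 1),
          a k ν.1 * y ⟨ν.1 + k, ν.2.trans (Nat.le_add_right _ _)⟩ = g ν) ∧
      (∀ ν : {ν : ℕ // μ ≤ ν}, y ⟨ν.1, hμ.trans ν.2⟩ = x ν) := by
  classical
  set g' : ℕ → L := fun ν => if h : m ≤ ν then g ⟨ν, h⟩ else 0 with hg'
  set x' : ℕ → L := fun ν => if h : μ ≤ ν then x ⟨ν, h⟩ else 0 with hx'
  set f : ℕ → L := extSeq L n μ a g' x' with hf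
  -- f agrees with x on ≥ μ
  have hfx : ∀ ν (h : μ ≤ ν), f ν = x ⟨ν, h⟩ := by
    intro ν h
    rw [hf, extSeq, dif_pos h, hx']
    simp [h]
  -- the key recurrence: for all ν ≥ m, ∑ a k ν * f (ν+k) = g ν
  have heq : ∀ ν (h : m ≤ ν),
      ∑ k ∈ Finset.range (n + 1), a k ν * f (ν + k) = g ⟨ν, h⟩ := by
    intro ν h
    rw [Finset.sum_range_succ']
    simp only [Nat.add_zero]
    by_cases hle : μ ≤ ν
    · have := hgx ⟨ν, hle⟩
      rw [this, Finset.sum_range_succ']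
      congr 1
      · apply Finset.sum_congr rfl; intro k _
        rw [hfx (ν + (k + 1)) (hle.trans (Nat.le_add_right _ _))]
      · rw [hfx ν hle]; simp
    · have hfν : f ν = Ring.inverse (a 0 ν) *
          (g' ν - ∑ k ∈ Finset.range n, a (k + 1) ν * f (ν + k + 1)) := by
        rw [hf, extSeq, dif_neg hle]
      rw [hfν, ← mul_assoc, Ring.mul_inverse_cancel _ (ha0 ν h), one_mul]
      have : g' ν = g ⟨ν, h⟩ := by simp [hg', h]
      rw [this]
      have hsum : ∑ k ∈ Finset.range n, a (k + 1) ν * f (ν + (k + 1))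
          = ∑ k ∈ Finset.range n, a (k + 1) ν * f (ν + k + 1) := by
        apply Finset.sum_congr rfl; intro k _; ring_nf
      rw [hsum]; abel
  refine ⟨fun ν => f ν.1, ⟨fun ν => heq ν.1 ν.2, fun ν => hfx ν.1 ν.2⟩, ?_⟩
  rintro y ⟨hy1, hy2⟩
  -- uniqueness by downward induction
  have key : ∀ d ν (h : m ≤ ν), μ ≤ ν + d → y ⟨ν, h⟩ = f ν := by
    intro d
    induction d with
    | zero => intro ν h hle; rw [Nat.add_zero] at hle; rw [hy2 ⟨ν, hle⟩, hfx ν hle]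
    | succ d ih =>
      intro ν h hle
      by_cases hle' : μ ≤ ν
      · rw [hy2 ⟨ν, hle'⟩, hfx ν hle']
      · have e1 := hy1 ⟨ν, h⟩
        have e2 := heq ν h
        rw [Finset.sum_range_succ'] at e1 e2
        simp only [Nat.add_zero] at e1 e2
        have hrest : ∀ k ∈ Finset.range n,
            a (k + 1) ν * y ⟨ν + (k + 1), h.trans (Nat.le_add_right _ _)⟩
            = a (k + 1) ν * f (ν + (k + 1)) := by
          intro k _
          rw [ih (ν + (k + 1)) (h.trans (Nat.le_add_right _ _)) (by omega)]
        rw [Finset.sum_congr rfl hrest] at e1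
        have : a 0 ν * y ⟨ν, h⟩ = a 0 ν * f ν :=
          add_left_cancel (e1.trans e2.symm)
        have hu := ha0 ν h
        exact hu.mul_left_cancel this
      
  funext ν
  exact key μ ν.1 ν.2 (Nat.le_add_left _ _)
end
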